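/- The function φ(x) = 2(e^{-x} - 1 + x)/(e^{-x} - 1)² is strictly increasing on (0, ∞), with φ(x) → 1 as x → 0⁺ and φ(x) → ∞ as x → ∞. -/

import Mathlib

/-!
With `t = e^{-x}`, the quotient rule gives `φ'(x) = 2(1 - t² - 2xt)/(1 - t)³`, and multiplying
`x < sinh x` by `2t` shows `2xt < 1 - t²`, so `φ' > 0`. At `0⁺` numerator and denominator both
vanish and L'Hôpital's rule leaves `e^x → 1`; at `∞` the numerator grows like `2x` while the
denominator tends to `1`.
-/

open Filter Real Topology

noncomputable def phi (x : ℝ) : ℝ := 2 * (exp (-x) - 1 + x) / (exp (-x) - 1) ^ 2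

lemma exp_neg_lt_one {x : ℝ} (hx : 0 < x) : exp (-x) < 1 :=
  exp_lt_one_iff.mpr (neg_neg_iff_pos.mpr hx)

lemma two_mul_mul_exp_neg_lt {x : ℝ} (hx : 0 < x) : 2 * x * exp (-x) < 1 - exp (-x) ^ 2 := by
  have hsinh : 2 * x < exp x - exp (-x) := by
    have := self_lt_sinh_iff.mpr hx
    rw [sinh_eq] at this
    linarith
  calc 2 * x * exp (-x) < (exp x - exp (-x)) * exp (-x) := by gcongr
    _ = 1 - exp (-x) ^ 2 := by rw [sub_mul, ← exp_add, add_neg_cancel, exp_zero, sq]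

lemma hasDerivAt_exp_neg (x : ℝ) : HasDerivAt (fun y ↦ exp (-y)) (-exp (-x)) x := by
  simpa using (hasDerivAt_neg x).exp

lemma hasDerivAt_phi_num (x : ℝ) :
    HasDerivAt (fun y ↦ 2 * (exp (-y) - 1 + y)) (2 * (1 - exp (-x))) x :=
  ((((hasDerivAt_exp_neg x).sub_const 1).add (hasDerivAt_id x)).const_mul 2).congr_deriv
    (by ring)

lemma hasDerivAt_phi_den (x : ℝ) :
    HasDerivAt (fun y ↦ (exp (-y) - 1) ^ 2) (2 * (1 - exp (-x)) * exp (-x)) x :=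
  (((hasDerivAt_exp_neg x).sub_const 1).fun_pow 2).congr_deriv (by ring)

lemma hasDerivAt_phi {x : ℝ} (hx : 0 < x) :
    HasDerivAt phi (2 * (1 - exp (-x) ^ 2 - 2 * x * exp (-x)) / (1 - exp (-x)) ^ 3) x := by
  have hne : exp (-x) - 1 ≠ 0 := (sub_neg.mpr (exp_neg_lt_one hx)).ne
  have hne' : 1 - exp (-x) ≠ 0 := (sub_pos.mpr (exp_neg_lt_one hx)).ne'
  refine ((hasDerivAt_phi_num x).div (hasDerivAt_phi_den x) (pow_ne_zero 2 hne)).congr_deriv ?_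
  field_simp
  ring

lemma phi_strictMonoOn : StrictMonoOn phi (Set.Ioi 0) := by
  refine strictMonoOn_of_deriv_pos (convex_Ioi 0)
    (fun x hx ↦ (hasDerivAt_phi hx).continuousAt.continuousWithinAt) fun x hx ↦ ?_
  rw [interior_Ioi] at hx
  rw [(hasDerivAt_phi hx).deriv]
  have h1 := sub_pos.mpr (exp_neg_lt_one hx)
  have h2 := sub_pos.mpr (two_mul_mul_exp_neg_lt hx)
  positivity

lemma tendsto_phi_nhdsGT_zero : Tendsto phi (𝓝[>] 0) (𝓝 1) := by
  have hcont : ∀ f : ℝ → ℝ, Continuous f → f 0 = 0 → Tendsto f (𝓝[>] 0) (𝓝 0) :=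
    fun f hf h0 ↦ (hf.tendsto' 0 0 h0).mono_left nhdsWithin_le_nhds
  refine HasDerivAt.lhopital_zero_nhdsGT (.of_forall hasDerivAt_phi_num)
    (.of_forall hasDerivAt_phi_den) ?_ (hcont _ (by fun_prop) (by simp))
    (hcont _ (by fun_prop) (by simp)) ?_
  · filter_upwards [self_mem_nhdsWithin] with x hx
    have := sub_pos.mpr (exp_neg_lt_one hx)
    positivity
  · -- the quotient of derivatives is `exp x`
    have hexp : Tendsto exp (𝓝[>] 0) (𝓝 1) :=
      (continuous_exp.tendsto' 0 1 exp_zero).mono_left nhdsWithin_le_nhds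
    refine hexp.congr' ?_
    filter_upwards [self_mem_nhdsWithin] with x hx
    have := (sub_pos.mpr (exp_neg_lt_one hx)).ne'
    rw [div_mul_cancel_left₀ (mul_ne_zero two_ne_zero this), exp_neg, inv_inv]

lemma tendsto_phi_atTop : Tendsto phi atTop atTop := by
  have hnum : Tendsto (fun x ↦ 2 * (exp (-x) - 1 + x)) atTop atTop := by
    have := (tendsto_exp_neg_atTop_nhds_zero.sub_const 1).add_atTop tendsto_id
    exact this.const_mul_atTop two_pos
  have hden : Tendsto (fun x ↦ ((exp (-x) - 1) ^ 2)⁻¹) atTop (𝓝 1) := by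
    simpa using ((tendsto_exp_neg_atTop_nhds_zero.sub_const 1).pow 2).inv₀ (by norm_num)
  exact hnum.atTop_mul_pos one_pos hden

/-- The function `φ(x) = 2(e^{-x} - 1 + x)/(e^{-x} - 1)²` is strictly increasing on `(0,∞)`,
tends to `1` as `x → 0⁺` and tends to `∞` as `x → ∞`. -/
theorem phi_ratio_strictMono_and_limits :
    StrictMonoOn (fun x : ℝ => 2 * (Real.exp (-x) - 1 + x) / (Real.exp (-x) - 1) ^ 2)
        (Set.Ioi (0 : ℝ)) ∧
      Tendsto (fun x : ℝ => 2 * (Real.exp (-x) - 1 + x) / (Real.exp (-x) - 1) ^ 2)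
        (nhdsWithin 0 (Set.Ioi (0 : ℝ))) (nhds 1) ∧
      Tendsto (fun x : ℝ => 2 * (Real.exp (-x) - 1 + x) / (Real.exp (-x) - 1) ^ 2)
        atTop atTop :=
  ⟨phi_strictMonoOn, tendsto_phi_nhdsGT_zero, tendsto_phi_atTop⟩
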